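/- Let ε_k ≥ 0 and δ_k ∈ [0,1] for 0 ≤ k ≤ K, and suppose real-valued random mechanisms M_k, M_k' satisfy P(M_k ∈ T) ≤ e^{ε_k} P(M_k' ∈ T) + δ_k for every measurable set T, with the M_k mutually independent and the M_k' mutually independent. Then for product sets T = ∏_{k=0}^K T^{(k)}, P((M_0,…,M_K) ∈ T) ≤ e^{∑_{k=0}^K ε_k} P((M_0',…,M_K') ∈ T) + e^{∑_{k=0}^K ε_k}(∏_{k=0}^K (1 + δ_k) - 1). -/

import Mathlib

open MeasureTheory ProbabilityTheory
open scoped MeasureTheory ProbabilityTheory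

/-!
By independence both probabilities factor over `k`. Each factor satisfies
`p_k ≤ e^{ε_k} (q_k + δ_k)` since `e^{ε_k} ≥ 1`, and expanding `∏ (q_k + δ_k)` with `q_k ≤ 1`
bounds every term containing some `δ_k` by the corresponding term of `∏ (1 + δ_k) - 1`.
-/

theorem Finset.prod_add_le_prod_add_prod_one_add_sub_one {ι R : Type*}
    [CommRing R] [LinearOrder R] [IsStrictOrderedRing R] (s : Finset ι) {g d : ι → R}
    (hg : ∀ i ∈ s, g i ∈ Set.Icc 0 1) (hd : ∀ i ∈ s, 0 ≤ d i) :
    ∏ i ∈ s, (g i + d i) ≤ ∏ i ∈ s, g i + (∏ i ∈ s, (1 + d i) - 1) := by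
  classical
  induction s using Finset.induction_on with
  | empty => simp
  | insert a s ha ih =>
    simp only [Finset.mem_insert, forall_eq_or_imp] at hg hd
    obtain ⟨⟨hga0, hga1⟩, hg⟩ := hg
    obtain ⟨hda, hd⟩ := hd
    have h_ind := ih hg hd
    have h_le_one_add : ∏ i ∈ s, (g i + d i) ≤ ∏ i ∈ s, (1 + d i) :=
      Finset.prod_le_prod (fun i hi => add_nonneg (hg i hi).1 (hd i hi))
        fun i hi => by linarith [(hg i hi).2]
    have h_one_le : 1 ≤ ∏ i ∈ s, (1 + d i) :=
      Finset.one_le_prod fun i hi => by linarith [hd i hi]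
    rw [Finset.prod_insert ha, Finset.prod_insert ha, Finset.prod_insert ha]
    nlinarith [mul_le_mul_of_nonneg_left h_ind hga0, mul_le_mul_of_nonneg_left h_le_one_add hda]

theorem prod_le_exp_sum_mul_prod_add {ι : Type*} (s : Finset ι) {p q ε δ : ι → ℝ}
    (hp : ∀ i ∈ s, 0 ≤ p i) (hq : ∀ i ∈ s, q i ∈ Set.Icc 0 1)
    (hε : ∀ i ∈ s, 0 ≤ ε i) (hδ : ∀ i ∈ s, 0 ≤ δ i)
    (hpq : ∀ i ∈ s, p i ≤ Real.exp (ε i) * q i + δ i) :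
    ∏ i ∈ s, p i ≤ Real.exp (∑ i ∈ s, ε i) * ∏ i ∈ s, q i
      + Real.exp (∑ i ∈ s, ε i) * (∏ i ∈ s, (1 + δ i) - 1) := by
  have h_factor : ∀ i ∈ s, p i ≤ Real.exp (ε i) * (q i + δ i) := fun i hi => by
    nlinarith [hpq i hi, Real.one_le_exp (hε i hi), hδ i hi]
  calc ∏ i ∈ s, p i ≤ ∏ i ∈ s, Real.exp (ε i) * (q i + δ i) := Finset.prod_le_prod hp h_factor
    _ = Real.exp (∑ i ∈ s, ε i) * ∏ i ∈ s, (q i + δ i) := by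
      rw [Finset.prod_mul_distrib, Real.exp_sum]
    _ ≤ Real.exp (∑ i ∈ s, ε i) * (∏ i ∈ s, q i + (∏ i ∈ s, (1 + δ i) - 1)) := by
      gcongr
      exact s.prod_add_le_prod_add_prod_one_add_sub_one hq hδ
    _ = _ := mul_add _ _ _

theorem ProbabilityTheory.iIndepFun.measureReal_setOf_forall_mem {Ω ι : Type*}
    [MeasurableSpace Ω] [Fintype ι] {β : ι → Type*} [∀ i, MeasurableSpace (β i)]
    {μ : Measure Ω} {f : ∀ i, Ω → β i} (hf : iIndepFun f μ) {T : ∀ i, Set (β i)}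
    (hT : ∀ i, MeasurableSet (T i)) :
    μ.real {ω | ∀ i, f i ω ∈ T i} = ∏ i, μ.real (f i ⁻¹' T i) := by
  have h_iInter : {ω | ∀ i, f i ω ∈ T i} = ⋂ i, f i ⁻¹' T i := by ext; simp
  rw [h_iInter, measureReal_def, hf.meas_iInter fun i => ⟨T i, hT i, rfl⟩,
    ENNReal.toReal_prod]
  rfl

theorem dp_composition_general
    {Ω Ω' : Type*} [MeasureSpace Ω] [MeasureSpace Ω']
    [IsProbabilityMeasure (ℙ : Measure Ω')]
    (K : ℕ) (M : Fin (K + 1) → Ω → ℝ) (M' : Fin (K + 1) → Ω' → ℝ)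
    (ε δ : Fin (K + 1) → ℝ)
    (hε : ∀ k, 0 ≤ ε k) (hδ : ∀ k, δ k ∈ Set.Icc (0 : ℝ) 1)
    (hind : iIndepFun M ℙ)
    (hind' : iIndepFun M' ℙ)
    (hDP : ∀ k, ∀ T : Set ℝ, MeasurableSet T →
      (ℙ (M k ⁻¹' T)).toReal ≤ Real.exp (ε k) * (ℙ (M' k ⁻¹' T)).toReal + δ k)
    (T : Fin (K + 1) → Set ℝ) (hT : ∀ k, MeasurableSet (T k)) :
    (ℙ {ω | ∀ k, M k ω ∈ T k}).toReal ≤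
      Real.exp (∑ k, ε k) * (ℙ {ω | ∀ k, M' k ω ∈ T k}).toReal
        + Real.exp (∑ k, ε k) * (∏ k, (1 + δ k) - 1) := by
  simp only [← measureReal_def] at hDP ⊢
  rw [hind.measureReal_setOf_forall_mem hT, hind'.measureReal_setOf_forall_mem hT]
  exact prod_le_exp_sum_mul_prod_add Finset.univ (fun _ _ => measureReal_nonneg)
    (fun _ _ => ⟨measureReal_nonneg, measureReal_le_one⟩) (fun k _ => hε k)
    (fun k _ => (hδ k).1) fun k _ => hDP k (T k) (hT k)

theorem dp_composition
    {Ω Ω' : Type*} [MeasureSpace Ω] [MeasureSpace Ω']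
    [IsProbabilityMeasure (ℙ : Measure Ω)] [IsProbabilityMeasure (ℙ : Measure Ω')]
    (K : ℕ) (M : Fin (K + 1) → Ω → ℝ) (M' : Fin (K + 1) → Ω' → ℝ)
    (ε δ : Fin (K + 1) → ℝ)
    (hε : ∀ k, 0 ≤ ε k) (hδ : ∀ k, δ k ∈ Set.Icc (0 : ℝ) 1)
    (hMmeas : ∀ k, Measurable (M k)) (hM'meas : ∀ k, Measurable (M' k))
    (hind : iIndepFun M ℙ)
    (hind' : iIndepFun M' ℙ)
    (hDP : ∀ k, ∀ T : Set ℝ, MeasurableSet T →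
      (ℙ (M k ⁻¹' T)).toReal ≤ Real.exp (ε k) * (ℙ (M' k ⁻¹' T)).toReal + δ k)
    (T : Fin (K + 1) → Set ℝ) (hT : ∀ k, MeasurableSet (T k)) :
    (ℙ {ω | ∀ k, M k ω ∈ T k}).toReal ≤
      Real.exp (∑ k, ε k) * (ℙ {ω | ∀ k, M' k ω ∈ T k}).toReal
        + Real.exp (∑ k, ε k) * (∏ k, (1 + δ k) - 1) :=
  dp_composition_general K M M' ε δ hε hδ hind hind' hDP T hT
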